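/- arXiv:1610.01929 — 11 statements merged into one kernel-verified Lean document; each statement's English description precedes it below -/
import Mathlib

section
/- Let n ≥ 1 and for each product i ∈ {1,…,n} let v_i > 0, a_i > 0, q_i ∈ (0,1), c_i ∈ [0,1), and set p_i = v_i a_i / Σ_j v_j a_j, λ̄ = (Σ_i p_i q_i)/(1 − Σ_i p_i c_i). Define the continuation quality q̄_i = q_i/(1 − c_i) and the continuation appeal ā_i = a_i (1 − c_i). Then λ̄ = (Σ_{i=1}^n v_i ā_i q̄_i) / (Σ_{i=1}^n v_i ā_i). That is, the trial-offer market with continuation reduces to a standard trial-offer market (multinomial logit) with qualities q̄_i and appeals ā_i. -/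
open Finset

theorem sum_mul_div_one_sub_sum_mul_of_eq_div_sum {ι K : Type*} [Fintype ι] [Field K]
    {w p : ι → K} (q c : ι → K) (hw : ∑ j, w j ≠ 0) (hp : ∀ i, p i = w i / ∑ j, w j) :
    (∑ i, p i * q i) / (1 - ∑ i, p i * c i) = (∑ i, w i * q i) / ∑ i, w i * (1 - c i) := by
  have hnormalize : ∀ f : ι → K, ∑ i, p i * f i = (∑ i, w i * f i) / ∑ j, w j := fun f => by
    rw [sum_div]
    exact sum_congr rfl fun i _ => by rw [hp]; ring
  have hden : ∑ i, w i * (1 - c i) = ∑ j, w j - ∑ i, w i * c i := by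
    rw [← sum_sub_distrib]
    exact sum_congr rfl fun i _ => by ring
  rw [hnormalize, hnormalize, hden, one_sub_div hw, div_div_div_cancel_right₀ hw]

theorem stmt1_general (n : ℕ) (v a q c : Fin (n + 1) → ℝ)
    (hv : ∀ i, 0 < v i) (ha : ∀ i, 0 < a i)
    (hc : ∀ i, c i ∈ Set.Ico (0 : ℝ) 1)
    (p : Fin (n + 1) → ℝ)
    (hp : ∀ i, p i = v i * a i / ∑ j, v j * a j)
    (lamBar : ℝ)
    (hlam : lamBar = (∑ i, p i * q i) / (1 - ∑ i, p i * c i))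
    (qBar aBar : Fin (n + 1) → ℝ)
    (hqBar : ∀ i, qBar i = q i / (1 - c i))
    (haBar : ∀ i, aBar i = a i * (1 - c i)) :
    lamBar = (∑ i, v i * aBar i * qBar i) / (∑ i, v i * aBar i) := by
  have hS : ∑ j, v j * a j ≠ 0 := (sum_pos (fun i _ => mul_pos (hv i) (ha i)) univ_nonempty).ne'
  have hnum : ∀ i, v i * aBar i * qBar i = v i * a i * q i := fun i => by
    have : 1 - c i ≠ 0 := sub_ne_zero.2 (hc i).2.ne'
    rw [haBar, hqBar]
    field_simp
  have hden : ∀ i, v i * aBar i = v i * a i * (1 - c i) := fun i => by rw [haBar]; ring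
  rw [sum_congr rfl fun i _ => hnum i, sum_congr rfl fun i _ => hden i]
  exact hlam.trans (sum_mul_div_one_sub_sum_mul_of_eq_div_sum q c hS hp)

/-- The trial-offer market with continuation reduces to a standard
trial-offer (multinomial logit) market with continuation qualities
`q̄ i = q i / (1 - c i)` and continuation appeals `ā i = a i * (1 - c i)`:
the expected number of purchases `λ̄ = (∑ i, p i * q i)/(1 - ∑ i, p i * c i)` equals
`(∑ i, v i * ā i * q̄ i) / (∑ i, v i * ā i)`. -/
theorem stmt1 (n : ℕ) (v a q c : Fin (n + 1) → ℝ)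
    (hv : ∀ i, 0 < v i) (ha : ∀ i, 0 < a i)
    (hq : ∀ i, q i ∈ Set.Ioo (0 : ℝ) 1) (hc : ∀ i, c i ∈ Set.Ico (0 : ℝ) 1)
    (p : Fin (n + 1) → ℝ)
    (hp : ∀ i, p i = v i * a i / ∑ j, v j * a j)
    (lamBar : ℝ)
    (hlam : lamBar = (∑ i, p i * q i) / (1 - ∑ i, p i * c i))
    (qBar aBar : Fin (n + 1) → ℝ)
    (hqBar : ∀ i, qBar i = q i / (1 - c i))
    (haBar : ∀ i, aBar i = a i * (1 - c i)) :
    lamBar = (∑ i, v i * aBar i * qBar i) / (∑ i, v i * aBar i) :=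
  stmt1_general n v a q c hv ha hc p hp lamBar hlam qBar aBar hqBar haBar
end

section
/- Let n ≥ 1 and for each product i ∈ {1,…,n} let v_i > 0, a_i > 0, q_i ∈ (0,1), c_i ∈ [0,1), and set p_i = v_i a_i / Σ_j v_j a_j and p̄_i = p_i / (1 − Σ_j p_j c_j). With ā_i = a_i(1 − c_i), one has p̄_i = v_i a_i / Σ_{j=1}^n (1 − c_j) v_j a_j = v_i a_i / Σ_{j=1}^n v_j ā_j. -/
/-- With trial probabilities `p i = v i * a i / ∑ j, v j * a j`,
adjusted trial probabilities `p̄ i = p i / (1 - ∑ j, p j * c j)`, and continuation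
appeals `ā i = a i * (1 - c i)`, one has
`p̄ i = v i * a i / ∑ j, (1 - c j) * v j * a j = v i * a i / ∑ j, v j * ā j`. -/
theorem stmt2 (n : ℕ) (v a q c : Fin (n + 1) → ℝ)
    (hv : ∀ i, 0 < v i) (ha : ∀ i, 0 < a i)
    (hq : ∀ i, q i ∈ Set.Ioo (0 : ℝ) 1) (hc : ∀ i, c i ∈ Set.Ico (0 : ℝ) 1)
    (p pBar aBar : Fin (n + 1) → ℝ)
    (hp : ∀ i, p i = v i * a i / ∑ j, v j * a j)
    (hpBar : ∀ i, pBar i = p i / (1 - ∑ j, p j * c j))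
    (haBar : ∀ i, aBar i = a i * (1 - c i)) :
    ∀ i, pBar i = v i * a i / ∑ j, (1 - c j) * (v j * a j) ∧
      pBar i = v i * a i / ∑ j, v j * aBar j := by
  intro i
  set S : ℝ := ∑ j, v j * a j with hS
  have hSpos : 0 < S := Finset.sum_pos (fun j _ => mul_pos (hv j) (ha j)) ⟨i, Finset.mem_univ i⟩
  set T : ℝ := ∑ j, (1 - c j) * (v j * a j) with hT
  have hTpos : 0 < T :=
    Finset.sum_pos (fun j _ => mul_pos (by linarith [(hc j).2]) (mul_pos (hv j) (ha j)))
      ⟨i, Finset.mem_univ i⟩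
  have hden : 1 - ∑ j, p j * c j = T / S := by
    have h1 : ∑ j, p j * c j = (∑ j, v j * a j * c j) / S := by
      rw [Finset.sum_div]
      exact Finset.sum_congr rfl fun j _ => by rw [hp j]; ring
    rw [h1, hT, eq_div_iff hSpos.ne', sub_mul, div_mul_cancel₀ _ hSpos.ne', one_mul, hS,
      ← Finset.sum_sub_distrib]
    exact Finset.sum_congr rfl fun j _ => by ring
  have key : pBar i = v i * a i / T := by
    rw [hpBar i, hp i, hden]; field_simp
  refine ⟨key, ?_⟩
  rw [key]
  congr 1
  exact Finset.sum_congr rfl fun j _ => by rw [haBar j]; ring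
end

section
/- Let n ≥ 1 and for each product i ∈ {1,…,n} let v_i > 0, a_i > 0, q_i ∈ (0,1), c_i ∈ [0,1). Let π* be a ranking maximizing λ(σ) over all permutations σ of {1,…,n}, and π_c* a ranking maximizing λ̄(σ) over all permutations. Then λ(π*) ≤ λ̄(π_c*) ≤ λ(π*) / (1 − max_{1≤i≤n} c_i). -/
/-!
Every ranking induces a probability vector `p σ`, so `∑ i, p σ i * c i` lies in `[0, max c]`.
Hence `λ σ ≤ λ̄ σ ≤ λ σ / (1 - max c)` for every `σ`, and comparing the two maximizers through
these bounds gives both inequalities.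
-/

open Finset

section WeightedAverage

variable {ι : Type*} [Fintype ι]

lemma sum_div_sum_eq_one {w : ι → ℝ} (hw : ∑ j, w j ≠ 0) : ∑ i, w i / ∑ j, w j = 1 := by
  rw [← Finset.sum_div, div_self hw]

lemma sum_mul_le_sup' [Nonempty ι] {p : ι → ℝ} (hp₀ : ∀ i, 0 ≤ p i) (hp₁ : ∑ i, p i = 1)
    (c : ι → ℝ) : ∑ i, p i * c i ≤ univ.sup' univ_nonempty c :=
  calc ∑ i, p i * c i ≤ ∑ i, p i * univ.sup' univ_nonempty c :=
        sum_le_sum fun i _ => mul_le_mul_of_nonneg_left (le_sup' c (mem_univ i)) (hp₀ i)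
    _ = univ.sup' univ_nonempty c := by rw [← sum_mul, hp₁, one_mul]

end WeightedAverage

/-- Let `π*` maximize `λ` and `πc*` maximize `λ̄` over all rankings.
Then `λ(π*) ≤ λ̄(πc*) ≤ λ(π*) / (1 - max_i c i)`. -/
theorem stmt6 (n : ℕ) (v a q c : Fin (n + 1) → ℝ)
    (hv : ∀ i, 0 < v i) (ha : ∀ i, 0 < a i)
    (hq : ∀ i, q i ∈ Set.Ioo (0 : ℝ) 1) (hc : ∀ i, c i ∈ Set.Ico (0 : ℝ) 1)
    (p : Equiv.Perm (Fin (n + 1)) → Fin (n + 1) → ℝ)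
    (hp : ∀ σ i, p σ i = v (σ i) * a i / ∑ j, v (σ j) * a j)
    (lam lamBar : Equiv.Perm (Fin (n + 1)) → ℝ)
    (hlam : ∀ σ, lam σ = ∑ i, p σ i * q i)
    (hlamBar : ∀ σ, lamBar σ = (∑ i, p σ i * q i) / (1 - ∑ i, p σ i * c i))
    (πStar πcStar : Equiv.Perm (Fin (n + 1)))
    (hπStar : ∀ σ, lam σ ≤ lam πStar)
    (hπcStar : ∀ σ, lamBar σ ≤ lamBar πcStar) :
    lam πStar ≤ lamBar πcStar ∧
      lamBar πcStar ≤ lam πStar / (1 - Finset.univ.sup' Finset.univ_nonempty c) := by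
  have hmax : univ.sup' univ_nonempty c < 1 := (sup'_lt_iff _).2 fun i _ => (hc i).2
  have hweight (σ : Equiv.Perm (Fin (n + 1))) : 0 < ∑ j, v (σ j) * a j :=
    sum_pos (fun j _ => mul_pos (hv _) (ha _)) univ_nonempty
  have hp₀ (σ) (i) : 0 ≤ p σ i := by
    rw [hp]; exact div_nonneg (mul_pos (hv _) (ha _)).le (hweight σ).le
  have hp₁ (σ) : ∑ i, p σ i = 1 := by
    simp only [hp]; exact sum_div_sum_eq_one (hweight σ).ne'
  have hlam₀ (σ) : 0 ≤ lam σ := by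
    rw [hlam]; exact sum_nonneg fun i _ => mul_nonneg (hp₀ σ i) (hq i).1.le
  have hcont₀ (σ) : 0 ≤ ∑ i, p σ i * c i :=
    sum_nonneg fun i _ => mul_nonneg (hp₀ σ i) (hc i).1
  have hcont_le (σ) := sum_mul_le_sup' (hp₀ σ) (hp₁ σ) c
  constructor
  · calc lam πStar ≤ lamBar πStar := by
          rw [hlamBar, ← hlam]
          exact le_div_self (hlam₀ _) (by linarith [hcont_le πStar]) (by linarith [hcont₀ πStar])
      _ ≤ lamBar πcStar := hπcStar πStar
  · rw [hlamBar, ← hlam]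
    exact div_le_div₀ (hlam₀ πStar) (hπStar πcStar) (sub_pos.2 hmax)
      (by linarith [hcont_le πcStar])
end

section
/- Let ρ ∈ (0,1) and r ≥ 0 be real numbers. The function h(x) = x / (1 − ρ x^r (1 − x)) (with real powers, 0^0 = 1) is well defined and strictly monotonically increasing on the interval (0,1). -/
/-
Writing `D x = 1 - ρ x^r (1 - x)`, one has `D x / x = 1 + (1/x - 1) (1 - ρ x^r)`. On `(0, 1]` both
factors of the product are nonnegative and antitone, the first one strictly, and `1 - ρ x^r > 0`
since `ρ < 1`. Hence `D x / x ≥ 1` is strictly decreasing, and its reciprocal `x / D x` is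
strictly increasing.
-/

open Set

lemma mul_rpow_lt_one {ρ r x : ℝ} (hρ0 : 0 ≤ ρ) (hρ1 : ρ < 1) (hr : 0 ≤ r) (hx0 : 0 ≤ x)
    (hx1 : x ≤ 1) : ρ * x ^ r < 1 :=
  (mul_le_of_le_one_right hρ0 (Real.rpow_le_one hx0 hx1 hr)).trans_lt hρ1

lemma one_sub_mul_rpow_mul_one_sub_pos {ρ r x : ℝ} (hρ0 : 0 ≤ ρ) (hρ1 : ρ < 1) (hr : 0 ≤ r)
    (hx0 : 0 ≤ x) (hx1 : x ≤ 1) : 0 < 1 - ρ * x ^ r * (1 - x) := by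
  have hle : ρ * x ^ r * (1 - x) ≤ ρ * x ^ r :=
    mul_le_of_le_one_right (by positivity) (by linarith)
  linarith [mul_rpow_lt_one hρ0 hρ1 hr hx0 hx1]

lemma div_one_sub_mul_rpow_mul_one_sub (ρ r : ℝ) {x : ℝ} (hx : x ≠ 0) :
    x / (1 - ρ * x ^ r * (1 - x)) = (1 + (x⁻¹ - 1) * (1 - ρ * x ^ r))⁻¹ := by
  rw [← inv_div]
  congr 1
  field_simp
  ring

lemma one_le_one_add_inv_sub_one_mul {ρ r x : ℝ} (hρ0 : 0 ≤ ρ) (hρ1 : ρ < 1) (hr : 0 ≤ r)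
    (hx0 : 0 < x) (hx1 : x ≤ 1) : 1 ≤ 1 + (x⁻¹ - 1) * (1 - ρ * x ^ r) := by
  have hinv : 0 ≤ x⁻¹ - 1 := sub_nonneg.2 ((one_le_inv₀ hx0).2 hx1)
  have hpow : 0 ≤ 1 - ρ * x ^ r := (sub_pos.2 (mul_rpow_lt_one hρ0 hρ1 hr hx0.le hx1)).le
  linarith [mul_nonneg hinv hpow]

lemma strictAntiOn_one_add_inv_sub_one_mul {ρ r : ℝ} (hρ0 : 0 ≤ ρ) (hρ1 : ρ < 1) (hr : 0 ≤ r) :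
    StrictAntiOn (fun x : ℝ => 1 + (x⁻¹ - 1) * (1 - ρ * x ^ r)) (Ioc 0 1) := by
  rintro a ⟨ha0, ha1⟩ b ⟨hb0, hb1⟩ hab
  have hpow : ρ * a ^ r ≤ ρ * b ^ r :=
    mul_le_mul_of_nonneg_left (Real.rpow_le_rpow ha0.le hab.le hr) hρ0
  have hinv : b⁻¹ < a⁻¹ := (inv_lt_inv₀ hb0 ha0).2 hab
  have hb_inv : 0 ≤ b⁻¹ - 1 := sub_nonneg.2 ((one_le_inv₀ hb0).2 hb1)
  have ha_pow : 0 < 1 - ρ * a ^ r := sub_pos.2 (mul_rpow_lt_one hρ0 hρ1 hr ha0.le ha1)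
  simp only [add_lt_add_iff_left]
  calc (b⁻¹ - 1) * (1 - ρ * b ^ r) ≤ (b⁻¹ - 1) * (1 - ρ * a ^ r) := by gcongr
    _ < (a⁻¹ - 1) * (1 - ρ * a ^ r) := by gcongr

/-- For `ρ ∈ (0,1)` and real `r ≥ 0`, the function
`h x = x / (1 - ρ * x^r * (1 - x))` (real powers, `0^0 = 1`) is well defined
(its denominator is positive) and strictly monotonically increasing on `(0,1)`. -/
theorem stmt10 (ρ r : ℝ) (hρ : ρ ∈ Set.Ioo (0 : ℝ) 1) (hr : 0 ≤ r) :
    (∀ x ∈ Set.Ioo (0 : ℝ) 1, 0 < 1 - ρ * x ^ r * (1 - x)) ∧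
      StrictMonoOn (fun x : ℝ => x / (1 - ρ * x ^ r * (1 - x)))
        (Set.Ioo (0 : ℝ) 1) := by
  obtain ⟨hρ0, hρ1⟩ := hρ
  refine ⟨fun x hx => one_sub_mul_rpow_mul_one_sub_pos hρ0.le hρ1 hr hx.1.le hx.2.le, ?_⟩
  rintro a ⟨ha0, ha1⟩ b ⟨hb0, hb1⟩ hab
  simp only [div_one_sub_mul_rpow_mul_one_sub ρ r ha0.ne', div_one_sub_mul_rpow_mul_one_sub ρ r hb0.ne']
  refine (inv_lt_inv₀ ?_ ?_).2 <|
    strictAntiOn_one_add_inv_sub_one_mul hρ0.le hρ1 hr ⟨ha0, ha1.le⟩ ⟨hb0, hb1.le⟩ hab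
  · exact one_pos.trans_le (one_le_one_add_inv_sub_one_mul hρ0.le hρ1 hr ha0 ha1.le)
  · exact one_pos.trans_le (one_le_one_add_inv_sub_one_mul hρ0.le hρ1 hr hb0 hb1.le)
end

section
/- Let ρ ∈ (0,1) and r ≥ 0 be real numbers. For every x ∈ [0,1] one has ρ x^r ((r − 1) − r x) + 1 ≥ 1 − ρ > 0, where x^r is the real power with 0^0 = 1. (This quantity is the numerator of the derivative of h(x) = x/(1 − ρ x^r(1 − x)).) -/
/-- For `ρ ∈ (0,1)`, real `r ≥ 0`, and every `x ∈ [0,1]`,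
`ρ * x^r * ((r - 1) - r*x) + 1 ≥ 1 - ρ > 0` (real powers, `0^0 = 1`). This quantity
is the numerator of the derivative of `h x = x / (1 - ρ * x^r * (1 - x))`. -/
theorem stmt11 (ρ r : ℝ) (hρ : ρ ∈ Set.Ioo (0 : ℝ) 1) (hr : 0 ≤ r) :
    (∀ x ∈ Set.Icc (0 : ℝ) 1, 1 - ρ ≤ ρ * x ^ r * ((r - 1) - r * x) + 1) ∧
      0 < 1 - ρ := by
  obtain ⟨hρ0, hρ1⟩ := hρ
  refine ⟨fun x ⟨hx0, hx1⟩ => ?_, sub_pos.2 hρ1⟩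
  have hpow_le_one : x ^ r ≤ 1 := Real.rpow_le_one hx0 hx1 hr
  have hcorrection : 0 ≤ ρ * x ^ r * (r * (1 - x)) :=
    mul_nonneg (mul_nonneg hρ0.le (Real.rpow_nonneg hx0 r)) (mul_nonneg hr (sub_nonneg.2 hx1))
  calc 1 - ρ ≤ 1 - ρ * x ^ r := sub_le_sub_left (mul_le_of_le_one_right hρ0.le hpow_le_one) 1
    _ ≤ 1 - ρ * x ^ r + ρ * x ^ r * (r * (1 - x)) := le_add_of_nonneg_right hcorrection
    _ = ρ * x ^ r * ((r - 1) - r * x) + 1 := by ring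
end

section
/- Let ρ ∈ (0,1) and r ≥ 0, and for each product i ∈ {1,…,n} let q_i ∈ (0,1), c_i = ρ q_i^r (1 − q_i), and q̄_i = q_i/(1 − c_i). Then for all products i and j: q_i ≤ q_j if and only if q̄_i ≤ q̄_j. In particular, the quality ranking is preserved under the reduction from the continuation market to the standard trial-offer market. -/
noncomputable def continuationQuality (ρ r x : ℝ) : ℝ :=
  x / (1 - ρ * x ^ r * (1 - x))

section
variable {ρ r : ℝ}

lemma continuationProb_lt_one (hρ1 : ρ ≤ 1) (hr : 0 ≤ r) {x : ℝ}
    (hx : x ∈ Set.Ioc 0 1) : ρ * x ^ r * (1 - x) < 1 := by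
  have hρx : ρ * x ^ r ≤ 1 :=
    mul_le_one₀ hρ1 (Real.rpow_nonneg hx.1.le r) (Real.rpow_le_one hx.1.le hx.2 hr)
  calc ρ * x ^ r * (1 - x) ≤ 1 - x :=
        mul_le_of_le_one_left (sub_nonneg.mpr hx.2) hρx
    _ < 1 := by linarith [hx.1]

lemma mul_one_sub_continuationProb_lt (hρ0 : 0 ≤ ρ) (hρ1 : ρ < 1) (hr : 0 ≤ r) {a b : ℝ}
    (ha : 0 < a) (hb : b ≤ 1) (hab : a < b) :
    a * (1 - ρ * b ^ r * (1 - b)) < b * (1 - ρ * a ^ r * (1 - a)) := by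
  -- The difference of the two sides is affine in `ρ`: it equals `b - a > 0` at `ρ = 0`
  -- and is at least `(b - a)(1 - b ^ r) ≥ 0` at `ρ = 1`, since `a ^ r ≤ b ^ r`.
  have hpow : a ^ r ≤ b ^ r := Real.rpow_le_rpow ha.le hab.le hr
  have hb1 : b ^ r ≤ 1 := Real.rpow_le_one (ha.trans hab).le hb hr
  have at_one : 0 ≤ (b - a) + (a * b ^ r * (1 - b) - b * a ^ r * (1 - a)) := by
    nlinarith [mul_le_mul_of_nonneg_left hpow (by nlinarith : 0 ≤ b * (1 - a)),
      mul_nonneg (sub_nonneg.mpr hab.le) (sub_nonneg.mpr hb1)]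
  nlinarith [mul_nonneg hρ0 at_one, mul_pos (sub_pos.mpr hρ1) (sub_pos.mpr hab)]

lemma continuationQuality_strictMonoOn (hρ0 : 0 ≤ ρ) (hρ1 : ρ < 1) (hr : 0 ≤ r) :
    StrictMonoOn (continuationQuality ρ r) (Set.Ioc 0 1) := by
  intro a ha b hb hab
  have hda := sub_pos.mpr (continuationProb_lt_one hρ1.le hr ha)
  have hdb := sub_pos.mpr (continuationProb_lt_one hρ1.le hr hb)
  rw [continuationQuality, continuationQuality, div_lt_div_iff₀ hda hdb]
  exact mul_one_sub_continuationProb_lt hρ0 hρ1 hr ha.1 hb.2 hab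

end

/-- With `ρ ∈ (0,1)`, real `r ≥ 0`, qualities `q i ∈ (0,1)`,
continuation probabilities `c i = ρ * (q i)^r * (1 - q i)` (real powers, `0^0 = 1`),
and continuation qualities `q̄ i = q i / (1 - c i)`, for all products `i` and `j`:
`q i ≤ q j ↔ q̄ i ≤ q̄ j`. The quality ranking is preserved under the reduction. -/
theorem stmt12 (n : ℕ) (ρ r : ℝ) (hρ : ρ ∈ Set.Ioo (0 : ℝ) 1) (hr : 0 ≤ r)
    (q c qBar : Fin (n + 1) → ℝ)
    (hq : ∀ i, q i ∈ Set.Ioo (0 : ℝ) 1)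
    (hcdef : ∀ i, c i = ρ * q i ^ r * (1 - q i))
    (hqBar : ∀ i, qBar i = q i / (1 - c i)) :
    ∀ i j, q i ≤ q j ↔ qBar i ≤ qBar j := by
  intro i j
  have qBar_eq : ∀ k, qBar k = continuationQuality ρ r (q k) := fun k => by
    rw [hqBar, hcdef, continuationQuality]
  rw [qBar_eq, qBar_eq]
  exact ((continuationQuality_strictMonoOn hρ.1.le hρ.2 hr).le_iff_le
    (Set.Ioo_subset_Ioc_self (hq i)) (Set.Ioo_subset_Ioc_self (hq j))).symm
end

section
/- Let n ≥ 1 and for each product i ∈ {1,…,n} let v_i > 0, a_i > 0, q_i ∈ (0,1), c_i ∈ [0,1) with q_i + c_i < 1 for every i, and set ā_j = a_j(1 − c_j) and β = (Σ_{j=1}^n v_j a_j q_j)/(Σ_{j=1}^n v_j ā_j). Then 0 < β < 1 and for every product i, Σ_{m=0}^∞ (1 − β)^m · (v_i a_i q_i)/(Σ_{j=1}^n v_j ā_j) = v_i a_i q_i / Σ_{j=1}^n v_j a_j q_j. That is, the probability that the next purchase (after any number of sampling steps) is product i equals v_i a_i q_i / Σ_j v_j a_j q_j, the same as in the market without continuation.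 -/
/-! Since `q i < 1 - c i`, each term of `∑ j, v j * a j * q j` is smaller than the corresponding
term of `∑ j, v j * aBar j`, so `0 < β < 1`. The geometric series then sums to
`(v i * a i * q i / ∑ j, v j * aBar j) / β`, and the denominator `∑ j, v j * aBar j` cancels. -/

open Finset

lemma tsum_one_sub_pow_mul {β : ℝ} (hβ₀ : 0 < β) (hβ₁ : β < 1) (x : ℝ) :
    ∑' m : ℕ, (1 - β) ^ m * x = x / β := by
  rw [tsum_mul_right, tsum_geometric_of_lt_one (by linarith) (by linarith), sub_sub_cancel,
    div_eq_inv_mul]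

lemma sum_div_sum_mem_Ioo {ι : Type*} {s : Finset ι} (hs : s.Nonempty) {f g : ι → ℝ}
    (hf : ∀ i ∈ s, 0 < f i) (hfg : ∀ i ∈ s, f i < g i) :
    (∑ i ∈ s, f i) / ∑ i ∈ s, g i ∈ Set.Ioo 0 1 := by
  have hf_sum : 0 < ∑ i ∈ s, f i := sum_pos hf hs
  have hfg_sum : ∑ i ∈ s, f i < ∑ i ∈ s, g i := sum_lt_sum_of_nonempty hs hfg
  have hg_sum : 0 < ∑ i ∈ s, g i := hf_sum.trans hfg_sum
  exact ⟨div_pos hf_sum hg_sum, (div_lt_one hg_sum).2 hfg_sum⟩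

theorem stmt13_general (n : ℕ) (v a q c aBar : Fin (n + 1) → ℝ)
    (hv : ∀ i, 0 < v i) (ha : ∀ i, 0 < a i)
    (hq : ∀ i, q i ∈ Set.Ioo (0 : ℝ) 1)
    (hqc : ∀ i, q i + c i < 1)
    (haBar : ∀ j, aBar j = a j * (1 - c j))
    (β : ℝ)
    (hβ : β = (∑ j, v j * a j * q j) / (∑ j, v j * aBar j)) :
    0 < β ∧ β < 1 ∧
      ∀ i, (∑' m : ℕ, (1 - β) ^ m * (v i * a i * q i / ∑ j, v j * aBar j)) =
        v i * a i * q i / ∑ j, v j * a j * q j := by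
  have hterm_pos (j : Fin (n + 1)) : 0 < v j * a j * q j :=
    mul_pos (mul_pos (hv j) (ha j)) (hq j).1
  have hterm_lt (j : Fin (n + 1)) : v j * a j * q j < v j * aBar j := by
    rw [haBar, ← mul_assoc]
    exact mul_lt_mul_of_pos_left (by linarith [hqc j]) (mul_pos (hv j) (ha j))
  obtain ⟨hβ₀, hβ₁⟩ : β ∈ Set.Ioo 0 1 := hβ ▸
    sum_div_sum_mem_Ioo univ_nonempty (fun j _ => hterm_pos j) (fun j _ => hterm_lt j)
  refine ⟨hβ₀, hβ₁, fun i => ?_⟩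
  have hD : 0 < ∑ j, v j * aBar j :=
    sum_pos (fun j _ => (hterm_pos j).trans (hterm_lt j)) univ_nonempty
  rw [tsum_one_sub_pow_mul hβ₀ hβ₁, hβ, div_div_div_cancel_right₀ hD.ne']

/-- With `q i + c i < 1` for all `i`, continuation appeals
`ā j = a j * (1 - c j)` and `β = (∑ j, v j * a j * q j) / (∑ j, v j * ā j)`, one has
`0 < β < 1`, and for every product `i` the probability that the next purchase is
product `i`, namely `∑' m, (1 - β)^m * (v i * a i * q i / ∑ j, v j * ā j)`, equals
`v i * a i * q i / ∑ j, v j * a j * q j` — the same as in the market without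
continuation. -/
theorem stmt13 (n : ℕ) (v a q c aBar : Fin (n + 1) → ℝ)
    (hv : ∀ i, 0 < v i) (ha : ∀ i, 0 < a i)
    (hq : ∀ i, q i ∈ Set.Ioo (0 : ℝ) 1) (hc : ∀ i, c i ∈ Set.Ico (0 : ℝ) 1)
    (hqc : ∀ i, q i + c i < 1)
    (haBar : ∀ j, aBar j = a j * (1 - c j))
    (β : ℝ)
    (hβ : β = (∑ j, v j * a j * q j) / (∑ j, v j * aBar j)) :
    0 < β ∧ β < 1 ∧
      ∀ i, (∑' m : ℕ, (1 - β) ^ m * (v i * a i * q i / ∑ j, v j * aBar j)) =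
        v i * a i * q i / ∑ j, v j * a j * q j :=
  stmt13_general n v a q c aBar hv ha hq hqc haBar β hβ
end

section
/- Let n ≥ 1 and for each i ∈ {1,…,n} let v_i > 0, ā_i > 0, q̄_i ≥ 0 be real numbers with v_1 ≥ v_2 ≥ … ≥ v_n and q̄_1 ≥ q̄_2 ≥ … ≥ q̄_n. Then (Σ_{i=1}^n v_i ā_i q̄_i)/(Σ_{j=1}^n v_j ā_j) ≥ (Σ_{i=1}^n ā_i q̄_i)/(Σ_{j=1}^n ā_j). That is, position bias increases the expected number of purchases under the quality-ranking policy in the continuation market. -/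
/-!
Cross-multiplied, the claim is the weighted Chebyshev sum inequality for the similarly ordered
sequences `v` and `q̄` with weights `ā`; it follows from the nonnegativity of
`∑ i, ∑ j, ā i * ā j * (v j - v i) * (q̄ j - q̄ i)`.
-/

open Finset

section WeightedChebyshev

variable {ι α : Type*} [CommRing α]

lemma sum_sum_mul_mul_sub_mul_sub (s : Finset ι) (w f g : ι → α) :
    ∑ i ∈ s, ∑ j ∈ s, w i * w j * ((f j - f i) * (g j - g i)) =
      2 * ((∑ i ∈ s, w i) * ∑ i ∈ s, w i * f i * g i -
        (∑ i ∈ s, w i * f i) * ∑ i ∈ s, w i * g i) := by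
  have expand : ∀ i j, w i * w j * ((f j - f i) * (g j - g i)) =
      w i * (w j * f j * g j) + w j * (w i * f i * g i) -
        (w i * f i) * (w j * g j) - (w j * f j) * (w i * g i) := fun i j => by ring
  simp only [expand, sum_add_distrib, sum_sub_distrib, ← mul_sum, ← sum_mul]
  ring

variable [LinearOrder α] [IsStrictOrderedRing α] {s : Finset ι} {w f g : ι → α}

theorem MonovaryOn.sum_mul_sum_le_sum_mul_sum (hfg : MonovaryOn f g s)
    (hw : ∀ i ∈ s, 0 ≤ w i) :
    (∑ i ∈ s, w i * f i) * ∑ i ∈ s, w i * g i ≤ (∑ i ∈ s, w i) * ∑ i ∈ s, w i * f i * g i := by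
  have hsum : 0 ≤ ∑ i ∈ s, ∑ j ∈ s, w i * w j * ((f j - f i) * (g j - g i)) :=
    sum_nonneg fun i hi => sum_nonneg fun j hj =>
      mul_nonneg (mul_nonneg (hw i hi) (hw j hj)) (hfg.sub_mul_sub_nonneg hi hj)
  rw [sum_sum_mul_mul_sub_mul_sub] at hsum
  linarith

end WeightedChebyshev

theorem stmt14_general (n : ℕ) (v aBar qBar : Fin (n + 1) → ℝ)
    (hv : ∀ i, 0 < v i) (haBar : ∀ i, 0 < aBar i)
    (hvmono : ∀ i j : Fin (n + 1), i ≤ j → v j ≤ v i)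
    (hqmono : ∀ i j : Fin (n + 1), i ≤ j → qBar j ≤ qBar i) :
    (∑ i, v i * aBar i * qBar i) / (∑ j, v j * aBar j) ≥
      (∑ i, aBar i * qBar i) / (∑ j, aBar j) := by
  have hchebyshev := MonovaryOn.sum_mul_sum_le_sum_mul_sum (s := univ) (w := aBar)
    ((Antitone.monovary hvmono hqmono).monovaryOn _) fun i _ => (haBar i).le
  rw [ge_iff_le, div_le_div_iff₀ (sum_pos (fun j _ => haBar j) univ_nonempty)
    (sum_pos (fun j _ => mul_pos (hv j) (haBar j)) univ_nonempty)]
  simp only [mul_comm (v _) (aBar _)]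
  linarith

/-- (Position bias helps the quality ranking.) If `v i > 0`,
`ā i > 0`, `q̄ i ≥ 0` with `v` and `q̄` nonincreasing (the quality ranking places
the products of highest continuation quality in the most visible positions), then
`(∑ i, v i * ā i * q̄ i) / (∑ j, v j * ā j) ≥ (∑ i, ā i * q̄ i) / (∑ j, ā j)`. -/
theorem stmt14 (n : ℕ) (v aBar qBar : Fin (n + 1) → ℝ)
    (hv : ∀ i, 0 < v i) (haBar : ∀ i, 0 < aBar i) (hqBar : ∀ i, 0 ≤ qBar i)
    (hvmono : ∀ i j : Fin (n + 1), i ≤ j → v j ≤ v i)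
    (hqmono : ∀ i j : Fin (n + 1), i ≤ j → qBar j ≤ qBar i) :
    (∑ i, v i * aBar i * qBar i) / (∑ j, v j * aBar j) ≥
      (∑ i, aBar i * qBar i) / (∑ j, aBar j) :=
  stmt14_general n v aBar qBar hv haBar hvmono hqmono
end

section
/- Let n ≥ 1 and for each product i ∈ {1,…,n} let v_i > 0, a_i > 0, q_i ∈ (0,1), c_i ∈ [0,1), with v_1 ≥ … ≥ v_n, q_1 ≥ … ≥ q_n, and q̄_1 ≥ … ≥ q̄_n where q̄_i = q_i/(1 − c_i) and ā_i = a_i(1 − c_i). Set λ̄ = (Σ_i v_i ā_i q̄_i)/(Σ_i v_i ā_i). Then Σ_{j=1}^n [ v_j² ā_j q̄_j (1 − c_j) / (Σ_{i=1}^n v_i ā_i + v_j(1 − c_j)) ] · (q̄_j − λ̄) ≥ 0. -/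
/-!
Put `u j = v j * aBar j`, `S = ∑ u` and `f j = v j q j / (S + v j q j / qBar j)`; since
`v j (1 - c j) = v j q j / qBar j`, the sum is `∑ u j f j (qBar j - lamBar)`. Under the quality
ranking both `f` and `qBar - lamBar` are nonincreasing, and `lamBar` is the `u`-weighted mean of
`qBar`, so `∑ u (qBar - lamBar) = 0`. The weighted Chebyshev sum inequality then gives
`S * ∑ u f (qBar - lamBar) ≥ (∑ u f) * 0`.
-/

open Finset

theorem Monovary.sum_mul_sum_le_sum_mul_sum_of_nonneg {ι α : Type*} [Fintype ι] [CommRing α]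
    [LinearOrder α] [IsStrictOrderedRing α] {w f g : ι → α} (hw : ∀ i, 0 ≤ w i)
    (hfg : Monovary f g) :
    (∑ i, w i * f i) * (∑ i, w i * g i) ≤ (∑ i, w i) * ∑ i, w i * f i * g i := by
  have hpairs : 0 ≤ ∑ i, ∑ j, w i * w j * ((f j - f i) * (g j - g i)) :=
    sum_nonneg fun i _ => sum_nonneg fun j _ =>
      mul_nonneg (mul_nonneg (hw i) (hw j)) (hfg.sub_mul_sub_nonneg i j)
  have hexpand : ∑ i, ∑ j, w i * w j * ((f j - f i) * (g j - g i)) =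
      2 * ((∑ i, w i) * (∑ i, w i * f i * g i) - (∑ i, w i * f i) * ∑ i, w i * g i) := by
    calc _ = ∑ i, ∑ j, (w i * (w j * f j * g j) + w i * f i * g i * w j
            - w i * f i * (w j * g j) - w i * g i * (w j * f j)) :=
          sum_congr rfl fun i _ => sum_congr rfl fun j _ => by ring
      _ = (∑ i, w i) * (∑ i, w i * f i * g i) + (∑ i, w i * f i * g i) * (∑ i, w i)
            - (∑ i, w i * f i) * (∑ i, w i * g i)
            - (∑ i, w i * g i) * (∑ i, w i * f i) := by
          simp only [sum_add_distrib, sum_sub_distrib, sum_mul_sum]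
      _ = _ := by ring
  nlinarith

theorem Antitone.div_add_div {ι : Type*} [Preorder ι] {x r : ι → ℝ} {S : ℝ} (hS : 0 ≤ S)
    (hx : ∀ i, 0 < x i) (hr : ∀ i, 0 < r i) (hxa : Antitone x) (hra : Antitone r) :
    Antitone fun i => x i / (S + x i / r i) := by
  intro i j hij
  have hrewrite : ∀ k, x k / (S + x k / r k) = (S / x k + 1 / r k)⁻¹ := fun k => by
    have := hx k; have := hr k
    field_simp
  simp only [hrewrite]
  exact inv_anti₀ (add_pos_of_nonneg_of_pos (div_nonneg hS (hx i).le) (one_div_pos.2 (hr i)))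
    (add_le_add (div_le_div_of_nonneg_left hS (hx j) (hxa hij))
      (one_div_le_one_div_of_le (hr j) (hra hij)))

/-- Under the quality ranking (visibilities, qualities, and
continuation qualities all nonincreasing), with `q̄ i = q i / (1 - c i)`,
`ā i = a i * (1 - c i)` and `λ̄ = (∑ i, v i * ā i * q̄ i) / (∑ i, v i * ā i)`,
the key sum in the social-influence argument is nonnegative:
`∑ j, (v j ^ 2 * ā j * q̄ j * (1 - c j) / (∑ i, v i * ā i + v j * (1 - c j))) * (q̄ j - λ̄) ≥ 0`. -/
theorem stmt15 (n : ℕ) (v a q c qBar aBar : Fin (n + 1) → ℝ)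
    (hv : ∀ i, 0 < v i) (ha : ∀ i, 0 < a i)
    (hq : ∀ i, q i ∈ Set.Ioo (0 : ℝ) 1) (hc : ∀ i, c i ∈ Set.Ico (0 : ℝ) 1)
    (hvmono : ∀ i j : Fin (n + 1), i ≤ j → v j ≤ v i)
    (hqmono : ∀ i j : Fin (n + 1), i ≤ j → q j ≤ q i)
    (hqBar : ∀ i, qBar i = q i / (1 - c i))
    (haBar : ∀ i, aBar i = a i * (1 - c i))
    (hqBarmono : ∀ i j : Fin (n + 1), i ≤ j → qBar j ≤ qBar i)
    (lamBar : ℝ)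
    (hlamBar : lamBar = (∑ i, v i * aBar i * qBar i) / (∑ i, v i * aBar i)) :
    0 ≤ ∑ j, (v j ^ 2 * aBar j * qBar j * (1 - c j) /
        ((∑ i, v i * aBar i) + v j * (1 - c j))) * (qBar j - lamBar) := by
  have hc1 (i) : 0 < 1 - c i := sub_pos.2 (hc i).2
  have hqBar_pos (i) : 0 < qBar i := hqBar i ▸ div_pos (hq i).1 (hc1 i)
  have hq_eq (i) : q i = qBar i * (1 - c i) := by rw [hqBar, div_mul_cancel₀ _ (hc1 i).ne']
  set u := fun i => v i * aBar i
  have hu (i) : 0 < u i := mul_pos (hv i) (haBar i ▸ mul_pos (ha i) (hc1 i))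
  set S := ∑ i, u i
  have hS : 0 < S := sum_pos (fun i _ => hu i) univ_nonempty
  set f := fun j => v j * q j / (S + v j * q j / qBar j)
  have hf : Antitone f := Antitone.div_add_div hS.le (fun i => mul_pos (hv i) (hq i).1) hqBar_pos
    (fun i j hij => mul_le_mul (hvmono i j hij) (hqmono i j hij) (hq j).1.le (hv i).le)
    (fun i j hij => hqBarmono i j hij)
  have hg : Antitone fun j => qBar j - lamBar := fun i j hij =>
    sub_le_sub_right (hqBarmono i j hij) _
  have hsummand : ∀ j, v j ^ 2 * aBar j * qBar j * (1 - c j) / (S + v j * (1 - c j)) *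
      (qBar j - lamBar) = u j * f j * (qBar j - lamBar) := fun j => by
    have := hqBar_pos j
    simp only [u, f, hq_eq]
    field_simp
  have hcentered : ∑ j, u j * (qBar j - lamBar) = 0 := by
    simp only [mul_sub, sum_sub_distrib, ← sum_mul, hlamBar]
    rw [mul_div_cancel₀ _ hS.ne']
    exact sub_self _
  have hcheb := (hf.monovary hg).sum_mul_sum_le_sum_mul_sum_of_nonneg fun i => (hu i).le
  rw [hcentered, mul_zero] at hcheb
  simp only [hsummand]
  exact (mul_nonneg_iff_of_pos_left hS).1 hcheb
end

section
/- Let n ≥ 1 and for each product i ∈ {1,…,n} let v_i > 0, a_i > 0, q_i ∈ (0,1), c_i ∈ [0,1), with v_1 ≥ … ≥ v_n, q_1 ≥ … ≥ q_n, and q̄_1 ≥ … ≥ q̄_n where q̄_i = q_i/(1 − c_i) and ā_i = a_i(1 − c_i). Set S = Σ_i v_i ā_i and λ̄ = (Σ_i v_i ā_i q̄_i)/S. Then Σ_{j=1}^n [ (v_j ā_j q̄_j / S) · (Σ_i v_i ā_i q̄_i + v_j(1 − c_j) q̄_j)/(S + v_j(1 − c_j)) ] + (1 − λ̄) · λ̄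 ≥ λ̄. That is, under the quality ranking with social influence, the expected number of purchases at step t+1 conditional on step t is at least the expected number of purchases at step t. -/
/-!
Write `u j = v j * ā j`, `w j = v j * (1 - c j)` and `λ̄ = T / S`. A purchase of `j` moves the
purchase rate from `λ̄` to `(T + w j * q̄ j) / (S + w j) = λ̄ + w j / (S + w j) * (q̄ j - λ̄)`,
so the inequality reduces to `∑ j, u j * f j * (q̄ j - λ̄) ≥ 0` with
`f j = q̄ j * w j / (S + w j) = v j * q j / (S + v j * (1 - c j))`. Under the quality ranking both
`f` and `q̄` are nonincreasing, and this is the weighted Chebyshev sum inequality.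
-/

open Finset

theorem Monovary.sum_mul_sum_le_sum_mul_sum_mul {ι R : Type*} [CommRing R] [LinearOrder R]
    [IsStrictOrderedRing R] {f g : ι → R} (hfg : Monovary f g) (s : Finset ι) {w : ι → R}
    (hw : ∀ i ∈ s, 0 ≤ w i) :
    (∑ i ∈ s, w i * f i) * ∑ i ∈ s, w i * g i ≤ (∑ i ∈ s, w i) * ∑ i ∈ s, w i * (f i * g i) := by
  set Q : ι → ι → R := fun i j => w i * (w j * (f j * g j)) - w i * f i * (w j * g j)
  have hQ : (∑ i ∈ s, w i) * ∑ i ∈ s, w i * (f i * g i)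
      - (∑ i ∈ s, w i * f i) * ∑ i ∈ s, w i * g i = ∑ i ∈ s, ∑ j ∈ s, Q i j := by
    simp only [Q, sum_mul_sum, ← sum_sub_distrib]
  -- `Q i j + Q j i = w i * w j * ((f j - f i) * (g j - g i))`
  have hpairs : 0 ≤ ∑ i ∈ s, ∑ j ∈ s, (Q i j + Q j i) :=
    sum_nonneg fun i hi => sum_nonneg fun j hj => by
      have := mul_nonneg (mul_nonneg (hw i hi) (hw j hj)) (hfg.sub_mul_sub_nonneg i j)
      simp only [Q]; linarith
  simp only [sum_add_distrib] at hpairs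
  rw [sum_comm (f := fun i j => Q j i)] at hpairs
  linarith

theorem Monovary.sum_mul_mul_sub_div_nonneg {ι K : Type*} [Field K] [LinearOrder K]
    [IsStrictOrderedRing K] {f g : ι → K} (hfg : Monovary f g) (s : Finset ι) {w : ι → K}
    (hw : ∀ i ∈ s, 0 ≤ w i) (hpos : 0 < ∑ i ∈ s, w i) :
    0 ≤ ∑ i ∈ s, w i * f i * (g i - (∑ j ∈ s, w j * g j) / ∑ j ∈ s, w j) := by
  have hsplit : ∑ i ∈ s, w i * f i * (g i - (∑ j ∈ s, w j * g j) / ∑ j ∈ s, w j) =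
      ((∑ i ∈ s, w i) * ∑ i ∈ s, w i * (f i * g i)
        - (∑ i ∈ s, w i * f i) * ∑ i ∈ s, w i * g i) / ∑ i ∈ s, w i := by
    simp only [mul_sub, sum_sub_distrib, ← sum_mul]
    field_simp
  rw [hsplit]
  exact div_nonneg (sub_nonneg.2 (hfg.sum_mul_sum_le_sum_mul_sum_mul s hw)) hpos.le

theorem add_mul_div_add_eq_div_add {K : Type*} [Field K] {S T w x : K} (hS : S ≠ 0)
    (hSw : S + w ≠ 0) : (T + w * x) / (S + w) = T / S + w / (S + w) * (x - T / S) := by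
  field_simp
  ring

theorem div_le_sum_mul_add_div_add_add {ι : Type*} [Fintype ι] {u w g : ι → ℝ} {S T : ℝ}
    (hu : ∀ i, 0 ≤ u i) (hw : ∀ i, 0 ≤ w i) (hS : ∑ i, u i = S) (hT : ∑ i, u i * g i = T)
    (hSpos : 0 < S) (hfg : Monovary (fun j => g j * (w j / (S + w j))) g) :
    T / S ≤ ∑ j, (u j * g j / S) * ((T + w j * g j) / (S + w j)) + (1 - T / S) * (T / S) := by
  set f := fun j => g j * (w j / (S + w j))
  have hterm : ∀ j, (u j * g j / S) * ((T + w j * g j) / (S + w j)) =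
      T / S * (u j * g j / S) + u j * f j * (g j - T / S) / S := fun j => by
    rw [add_mul_div_add_eq_div_add hSpos.ne' (add_pos_of_pos_of_nonneg hSpos (hw j)).ne']
    ring
  have hcov : 0 ≤ ∑ j, u j * f j * (g j - T / S) := by
    simpa only [hS, hT] using hfg.sum_mul_mul_sub_div_nonneg univ (fun i _ => hu i) (hS ▸ hSpos)
  rw [sum_congr rfl fun j _ => hterm j, sum_add_distrib, ← mul_sum, ← sum_div, ← sum_div, hT]
  have : T / S * (T / S) + (1 - T / S) * (T / S) = T / S := by ring
  linarith [div_nonneg hcov hSpos.le]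

theorem antitone_mul_div_add_mul {ι : Type*} [Preorder ι] {v q d : ι → ℝ} {S : ℝ}
    (hS : 0 < S) (hv : ∀ i, 0 ≤ v i) (hq : ∀ i, 0 ≤ q i) (hd : ∀ i, 0 < d i)
    (hv_anti : Antitone v) (hq_anti : Antitone q) (hqd_anti : Antitone fun i => q i / d i) :
    Antitone fun i => v i * q i / (S + v i * d i) := by
  intro i j hij
  have hqd : q j * d i ≤ q i * d j := (div_le_div_iff₀ (hd j) (hd i)).1 (hqd_anti hij)
  have hvq : v j * q j ≤ v i * q i :=
    mul_le_mul (hv_anti hij) (hq_anti hij) (hq j) (hv i)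
  rw [div_le_div_iff₀ (add_pos_of_pos_of_nonneg hS (mul_nonneg (hv j) (hd j).le))
    (add_pos_of_pos_of_nonneg hS (mul_nonneg (hv i) (hd i).le))]
  linarith [mul_le_mul_of_nonneg_left hqd (mul_nonneg (hv i) (hv j)),
    mul_le_mul_of_nonneg_right hvq hS.le]

/-- (Social influence is beneficial under the quality ranking in
the continuation market.) Under the quality ranking (visibilities, qualities, and
continuation qualities all nonincreasing), with `q̄ i = q i / (1 - c i)`,
`ā i = a i * (1 - c i)`, `S = ∑ i, v i * ā i` and `λ̄ = (∑ i, v i * ā i * q̄ i) / S`,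
the conditional expected number of purchases at step `t+1` is at least `λ̄`:
`∑ j, (v j * ā j * q̄ j / S) * ((∑ i, v i * ā i * q̄ i + v j * (1 - c j) * q̄ j) / (S + v j * (1 - c j))) + (1 - λ̄) * λ̄ ≥ λ̄`. -/
theorem stmt16 (n : ℕ) (v a q c qBar aBar : Fin (n + 1) → ℝ)
    (hv : ∀ i, 0 < v i) (ha : ∀ i, 0 < a i)
    (hq : ∀ i, q i ∈ Set.Ioo (0 : ℝ) 1) (hc : ∀ i, c i ∈ Set.Ico (0 : ℝ) 1)
    (hvmono : ∀ i j : Fin (n + 1), i ≤ j → v j ≤ v i)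
    (hqmono : ∀ i j : Fin (n + 1), i ≤ j → q j ≤ q i)
    (hqBar : ∀ i, qBar i = q i / (1 - c i))
    (haBar : ∀ i, aBar i = a i * (1 - c i))
    (hqBarmono : ∀ i j : Fin (n + 1), i ≤ j → qBar j ≤ qBar i)
    (S lamBar : ℝ)
    (hS : S = ∑ i, v i * aBar i)
    (hlamBar : lamBar = (∑ i, v i * aBar i * qBar i) / S) :
    lamBar ≤ (∑ j, (v j * aBar j * qBar j / S) *
        (((∑ i, v i * aBar i * qBar i) + v j * (1 - c j) * qBar j) /
          (S + v j * (1 - c j)))) + (1 - lamBar) * lamBar := by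
  have h1c : ∀ i, 0 < 1 - c i := fun i => sub_pos.2 (hc i).2
  have hu : ∀ i, 0 < v i * aBar i := fun i => by
    rw [haBar]; exact mul_pos (hv i) (mul_pos (ha i) (h1c i))
  have hSpos : 0 < S := hS ▸ sum_pos (fun i _ => hu i) univ_nonempty
  have hf : Antitone fun j => qBar j * (v j * (1 - c j) / (S + v j * (1 - c j))) := by
    have := antitone_mul_div_add_mul hSpos (fun i => (hv i).le) (fun i => (hq i).1.le) h1c
      (fun i j => hvmono i j) (fun i j => hqmono i j)
      (fun i j hij => by simpa only [← hqBar] using hqBarmono i j hij)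
    convert this using 2 with j
    rw [hqBar]
    field_simp [(h1c j).ne']
  rw [hlamBar]
  exact div_le_sum_mul_add_div_add_add (fun i => (hu i).le)
    (fun i => (mul_pos (hv i) (h1c i)).le) hS.symm rfl hSpos (hf.monovary hqBarmono)
end

section
/- There exists a trial-offer market instance in which the performance ranking differs between the market with and without continuation. Concretely, for n = 3 with visibilities v = (0.8, 0.5, 0.1), qualities q = (0.9, 0.2, 0.6), appeals a = (0.9, 0.1, 0.3), and continuation probabilities c_i = 0.8 · q_i^{0.7} (1 − q_i): the permutation assigning products (1,2,3) to positions (1,2,3) strictly maximizes λ(σ) = Σ_i p_i(σ) q_i over all 6 permutations, while the permutation assigning products (1,3,2) to positions (1,2,3) strictly maximizes λ̄(σ) = (Σ_i p_i(σ) q_i)/(1 − Σ_i p_i(σ) c_i); in particular the two maximizers are distinct. -/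
/-!
With `w i = v (σ i) * a i`, both objectives are ratios of sums over the three products:
`λ = ∑ w q / ∑ w` and `λ̄ = ∑ w q / ∑ w (1 - c)`. The claims are therefore finitely many
rational inequalities, once the three irrational continuation probabilities are enclosed in
intervals of width `10⁻⁴` by comparing tenth powers of `q ^ 0.7` with `q ^ 7`.
The identity gives `λ = 0.845` against at most `0.841` elsewhere, and `swap 1 2` gives
`λ̄ ≈ 0.9357` against at most `≈ 0.9268` elsewhere, so `0.931` separates the values of `λ̄`.
-/

open Equiv Finset

namespace Real

lemma lt_rpow_of_pow_lt_pow {x y r : ℝ} {m n : ℕ} (hx : 0 ≤ x) (hr : r * n = m)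
    (h : y ^ n < x ^ m) : y < x ^ r := by
  refine lt_of_pow_lt_pow_left₀ n (rpow_nonneg hx r) ?_
  rwa [← rpow_mul_natCast hx, hr, rpow_natCast]

lemma rpow_lt_of_pow_lt_pow {x y r : ℝ} {m n : ℕ} (hx : 0 ≤ x) (hy : 0 ≤ y) (hr : r * n = m)
    (h : x ^ m < y ^ n) : x ^ r < y := by
  refine lt_of_pow_lt_pow_left₀ n hy ?_
  rwa [← rpow_mul_natCast hx, hr, rpow_natCast]

end Real

lemma sum_div_sum_mul_div_one_sub {ι : Type*} [Fintype ι] (w q c : ι → ℝ)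
    (hw : ∑ i, w i ≠ 0) :
    (∑ i, w i / (∑ j, w j) * q i) / (1 - ∑ i, w i / (∑ j, w j) * c i) =
      (∑ i, w i * q i) / ∑ i, w i * (1 - c i) := by
  simp only [div_mul_eq_mul_div, ← Finset.sum_div, mul_one_sub, Finset.sum_sub_distrib]
  rw [one_sub_div hw, div_div_div_cancel_right₀ hw]

lemma Equiv.Perm.fin_three_cases (σ : Perm (Fin 3)) :
    σ = 1 ∨ σ = swap 1 2 ∨ σ = swap 0 1 ∨ σ = swap 0 2 ∨ σ = swap 0 1 * swap 1 2 ∨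
      σ = swap 1 2 * swap 0 1 := by
  revert σ
  decide

lemma continuation_bounds (q c : Fin 3 → ℝ) (hq : q = ![0.9, 0.2, 0.6])
    (hc : ∀ i, c i = 0.8 * q i ^ (0.7 : ℝ) * (1 - q i)) :
    (0.0743 < c 0 ∧ c 0 < 0.0744) ∧ (0.2074 < c 1 ∧ c 1 < 0.2075) ∧
      (0.2237 < c 2 ∧ c 2 < 0.2239) := by
  have rpow_bounds (x l u : ℝ) (hx : 0 ≤ x) (hu : 0 ≤ u) (hlx : l ^ 10 < x ^ 7)
      (hxu : x ^ 7 < u ^ 10) : l < x ^ (0.7 : ℝ) ∧ x ^ (0.7 : ℝ) < u :=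
    ⟨Real.lt_rpow_of_pow_lt_pow hx (by norm_num) hlx,
      Real.rpow_lt_of_pow_lt_pow hx hu (by norm_num) hxu⟩
  have h0 := rpow_bounds 0.9 0.9289 0.9290 (by norm_num) (by norm_num) (by norm_num) (by norm_num)
  have h1 := rpow_bounds 0.2 0.3241 0.3242 (by norm_num) (by norm_num) (by norm_num) (by norm_num)
  have h2 := rpow_bounds 0.6 0.6993 0.6994 (by norm_num) (by norm_num) (by norm_num) (by norm_num)
  simp only [hc, hq, Matrix.cons_val]
  refine ⟨⟨?_, ?_⟩, ⟨?_, ?_⟩, ?_, ?_⟩ <;> linarith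

lemma purchases_lt_purchases_one {v a q : Fin 3 → ℝ} (hv : v = ![0.8, 0.5, 0.1])
    (ha : a = ![0.9, 0.1, 0.3]) (hq : q = ![0.9, 0.2, 0.6]) {σ : Perm (Fin 3)} (hσ : σ ≠ 1) :
    (∑ i, v (σ i) * a i * q i) / ∑ i, v (σ i) * a i <
      (∑ i, v i * a i * q i) / ∑ i, v i * a i := by
  subst hv ha hq
  rcases σ.fin_three_cases with rfl | rfl | rfl | rfl | rfl | rfl
  · exact absurd rfl hσ
  all_goals
    simp only [Fin.sum_univ_three, Perm.coe_mul, Function.comp_apply, swap_apply_def,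
      Fin.reduceEq, reduceIte, Matrix.cons_val]
    norm_num

lemma purchases_div_one_sub_lt {v a q c : Fin 3 → ℝ} (hv : v = ![0.8, 0.5, 0.1])
    (ha : a = ![0.9, 0.1, 0.3]) (hq : q = ![0.9, 0.2, 0.6]) (hc0 : c 0 < 0.0744)
    (hc1 : 0.2074 < c 1) (hc1' : c 1 < 0.2075) (hc2 : c 2 < 0.2239) {σ : Perm (Fin 3)}
    (hσ : σ ≠ swap 1 2) :
    (∑ i, v (σ i) * a i * q i) / ∑ i, v (σ i) * a i * (1 - c i) < 0.931 := by
  subst hv ha hq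
  rcases σ.fin_three_cases with rfl | rfl | rfl | rfl | rfl | rfl
  on_goal 2 => exact absurd rfl hσ
  all_goals
    simp only [Fin.sum_univ_three, Perm.coe_one, id_eq, Perm.coe_mul, Function.comp_apply,
      swap_apply_def, Fin.reduceEq, reduceIte, Matrix.cons_val]
    rw [div_lt_iff₀ (by norm_num; linarith)]
    norm_num
    linarith

lemma lt_purchases_div_one_sub_swap {v a q c : Fin 3 → ℝ} (hv : v = ![0.8, 0.5, 0.1])
    (ha : a = ![0.9, 0.1, 0.3]) (hq : q = ![0.9, 0.2, 0.6]) (hc0 : 0.0743 < c 0)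
    (hc0' : c 0 < 0.0744) (hc1 : 0.2074 < c 1) (hc1' : c 1 < 0.2075) (hc2 : 0.2237 < c 2)
    (hc2' : c 2 < 0.2239) :
    0.931 < (∑ i, v (swap 1 2 i) * a i * q i) / ∑ i, v (swap 1 2 i) * a i * (1 - c i) := by
  subst hv ha hq
  simp only [Fin.sum_univ_three, swap_apply_def, Fin.reduceEq, reduceIte, Matrix.cons_val]
  rw [lt_div_iff₀ (by norm_num; linarith)]
  norm_num
  linarith

/-- A concrete 3-product instance where the performance ranking
differs between the markets with and without continuation. Products are indexed by
`Fin 3` (product `i+1` of the paper is index `i`); a ranking `σ` assigns product `i`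
to position `σ i`. With visibilities `(0.8, 0.5, 0.1)`, qualities `(0.9, 0.2, 0.6)`,
appeals `(0.9, 0.1, 0.3)`, and `c i = 0.8 * (q i)^(0.7) * (1 - q i)` (real power):
the identity permutation (products `(1,2,3)` in positions `(1,2,3)`) strictly
maximizes `λ`, while the permutation `Equiv.swap 1 2` (products `(1,3,2)` in
positions `(1,2,3)`) strictly maximizes `λ̄`; the two maximizers are distinct. -/
theorem stmt17 :
    ∀ v q a c : Fin 3 → ℝ,
      v = ![0.8, 0.5, 0.1] → q = ![0.9, 0.2, 0.6] → a = ![0.9, 0.1, 0.3] →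
      (∀ i, c i = 0.8 * q i ^ (0.7 : ℝ) * (1 - q i)) →
      ∀ p : Equiv.Perm (Fin 3) → Fin 3 → ℝ,
        (∀ σ i, p σ i = v (σ i) * a i / ∑ j, v (σ j) * a j) →
        ∀ lam lamBar : Equiv.Perm (Fin 3) → ℝ,
          (∀ σ, lam σ = ∑ i, p σ i * q i) →
          (∀ σ, lamBar σ = (∑ i, p σ i * q i) / (1 - ∑ i, p σ i * c i)) →
          (∀ σ : Equiv.Perm (Fin 3), σ ≠ 1 → lam σ < lam 1) ∧
          (∀ σ : Equiv.Perm (Fin 3), σ ≠ Equiv.swap 1 2 →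
            lamBar σ < lamBar (Equiv.swap 1 2)) ∧
          (1 : Equiv.Perm (Fin 3)) ≠ Equiv.swap 1 2 := by
  intro v q a c hv hq ha hc p hp lam lamBar hlam hlamBar
  obtain ⟨⟨hc0, hc0'⟩, ⟨hc1, hc1'⟩, hc2, hc2'⟩ := continuation_bounds q c hq hc
  have hv_pos : ∀ k, 0 < v k := by subst hv; intro k; fin_cases k <;> norm_num
  have ha_pos : ∀ i, 0 < a i := by subst ha; intro i; fin_cases i <;> norm_num
  have hlam_eq : ∀ σ, lam σ = (∑ i, v (σ i) * a i * q i) / ∑ i, v (σ i) * a i := by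
    intro σ
    simp only [hlam, hp, div_mul_eq_mul_div, ← Finset.sum_div]
  have hlamBar_eq : ∀ σ,
      lamBar σ = (∑ i, v (σ i) * a i * q i) / ∑ i, v (σ i) * a i * (1 - c i) := by
    intro σ
    simp only [hlamBar, hp]
    exact sum_div_sum_mul_div_one_sub _ _ _
      (Finset.sum_pos (fun i _ => mul_pos (hv_pos _) (ha_pos i)) univ_nonempty).ne'
  refine ⟨fun σ hσ => ?_, fun σ hσ => ?_, by decide⟩
  · simpa only [hlam_eq, Perm.one_apply] using purchases_lt_purchases_one hv ha hq hσ
  · rw [hlamBar_eq, hlamBar_eq]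
    exact (purchases_div_one_sub_lt hv ha hq hc0' hc1 hc1' hc2' hσ).trans
      (lt_purchases_div_one_sub_swap hv ha hq hc0 hc0' hc1 hc1' hc2 hc2')
end
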